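/- Let X : Fin N → Fin 2 → ℝ represent N processes with two increments each, where X i 0 is the value at time t₁ and X i 0 + X i 1 is the final value. Suppose the increments X i 1 are i.i.d. and independent of the first-stage values (X i 0). For any selection function f that picks a subset S of size n based on the first-stage values, the expected maximum of the final values over S is at most the expected maximum of final values over the greedy set S* (the n indices with the largest first-stage values). (Two-stage, one-elimination case of greedy optimality.) -/

import Mathlib

/-!
Given the first-stage values `v`, the increments form an exchangeable vector, so the expected
payoff `E[max_{i ∈ S} (v i + Δ i)]` of a set `S` does not change when `S` and `Δ` are relabelled
by the same permutation. If `T` is a greedy set for `v` and `#S = #T`, some permutation maps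
`S` onto `T` and does not decrease `v` on `S`, so it can only increase the payoff.
Independence of the two stages lets Fubini reduce the theorem to this comparison for a fixed `v`.
-/

open MeasureTheory ProbabilityTheory

theorem Equiv.Perm.exists_map_eq_of_forall_le {α β : Type*} [Finite α] [Preorder β]
    {v : α → β} {S T : Finset α} (hcard : S.card = T.card)
    (hT : ∀ i ∈ T, ∀ j ∉ T, v j ≤ v i) :
    ∃ σ : Equiv.Perm α, S.map σ.toEmbedding = T ∧ ∀ i ∈ S, v i ≤ v (σ i) := by
  classical
  obtain ⟨τ, hτ⟩ := Equiv.Perm.exists_map_finset_eq (S \ T) (T \ S) (Finset.card_sdiff_comm hcard)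
  have hτ_mem {i} (hiS : i ∈ S) (hiT : i ∉ T) : τ i ∈ T ∧ τ i ∉ S := by
    have h := Finset.mem_map_of_mem τ.toEmbedding (Finset.mem_sdiff.mpr ⟨hiS, hiT⟩)
    rw [hτ] at h
    simpa using h
  let φ : S → α := fun i => if (i : α) ∈ T then i else τ i
  have hφ_mem : ∀ i, φ i ∈ T := fun ⟨i, hi⟩ => by
    by_cases hiT : i ∈ T
    · simp [φ, hiT]
    · simpa [φ, hiT] using (hτ_mem hi hiT).1
  have hφ_inj : Function.Injective φ := by
    rintro ⟨i, hi⟩ ⟨j, hj⟩ h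
    by_cases hiT : i ∈ T <;> by_cases hjT : j ∈ T <;>
      simp only [φ, hiT, hjT, if_true, if_false] at h
    · simpa using h
    · exact absurd (h ▸ hi) (hτ_mem hj hjT).2
    · exact absurd (h ▸ hj) (hτ_mem hi hiT).2
    · simpa using h
  obtain ⟨σ, hσ⟩ := Equiv.Perm.exists_extending_pair (fun i : S => (i : α)) φ
    Subtype.val_injective hφ_inj
  refine ⟨σ, Finset.eq_of_subset_of_card_le ?_ (by simp [hcard]), fun i hi => ?_⟩
  · intro _ h
    obtain ⟨i, hi, rfl⟩ := Finset.mem_map.mp h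
    simpa [hσ ⟨i, hi⟩] using hφ_mem ⟨i, hi⟩
  · rw [hσ ⟨i, hi⟩]
    by_cases hiT : i ∈ T
    · simp [φ, hiT]
    · simpa [φ, hiT] using hT _ (hτ_mem hi hiT).1 i hiT

lemma Finset.abs_sup'_le_sum_abs {ι : Type*} [Fintype ι] (S : Finset ι) (hS : S.Nonempty)
    (a : ι → ℝ) : |S.sup' hS a| ≤ ∑ i, |a i| := by
  obtain ⟨i₀, hi₀⟩ := hS
  have ha : ∀ i, |a i| ≤ ∑ j, |a j| := fun i =>
    Finset.single_le_sum (fun j _ => abs_nonneg (a j)) (Finset.mem_univ i)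
  rw [abs_le]
  exact ⟨(neg_le_neg (ha i₀)).trans ((neg_abs_le _).trans (S.le_sup' a hi₀)),
    Finset.sup'_le _ _ fun i _ => (le_abs_self _).trans (ha i)⟩

section SupOverMeasurableFinset

variable {α ι : Type*} [MeasurableSpace α] [Fintype ι] {c : α → Finset ι} {a : ι → α → ℝ}

lemma measurable_sup'_of_measurable_finset (hc : ∀ x, (c x).Nonempty) (hcm : Measurable c)
    (ha : ∀ i, Measurable (a i)) :
    Measurable fun x => (c x).sup' (hc x) fun i => a i x := by
  -- Separating `c x` from its nonemptiness proof makes it a variable over a countable type.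
  have hG : Measurable fun p : Finset ι × α =>
      if h : p.1.Nonempty then p.1.sup' h (fun i => a i p.2) else 0 :=
    measurable_from_prod_countable_right fun S => by
      by_cases hS : S.Nonempty
      · simp only [hS, dite_true, ← Finset.sup'_apply]
        exact Finset.measurable_sup' hS fun i _ => ha i
      · simpa only [hS, dite_false] using measurable_const
  convert hG.comp (hcm.prodMk measurable_id) using 1
  funext x
  simp [hc x]

lemma integrable_sup'_of_measurable_finset {ρ : Measure α} (hc : ∀ x, (c x).Nonempty)
    (hcm : Measurable c) (ha : ∀ i, Measurable (a i)) (hai : ∀ i, Integrable (a i) ρ) :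
    Integrable (fun x => (c x).sup' (hc x) fun i => a i x) ρ :=
  (integrable_finsetSum Finset.univ fun i _ => (hai i).abs).mono'
    (measurable_sup'_of_measurable_finset hc hcm ha).aestronglyMeasurable
    (Filter.Eventually.of_forall fun x => by
      simpa only [Real.norm_eq_abs, Finset.sum_apply] using (c x).abs_sup'_le_sum_abs (hc x) _)

end SupOverMeasurableFinset

lemma measurePreserving_comp_perm_pi {ι β : Type*} [Fintype ι] [MeasurableSpace β]
    (m : ι → Measure β) [∀ i, SigmaFinite (m i)] (hm : ∀ i j, m i = m j) (σ : Equiv.Perm ι) :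
    MeasurePreserving (fun x : ι → β => x ∘ σ) (Measure.pi m) (Measure.pi m) := by
  have h := measurePreserving_piCongrLeft (α := fun _ => β) m σ.symm
  rw [show (fun i => m (σ.symm i)) = m from funext fun i => hm _ _] at h
  convert h using 1
  ext x i
  simp [MeasurableEquiv.coe_piCongrLeft, Equiv.piCongrLeft_apply_eq_cast]

section LawOfVector

variable {Ω ι : Type*} [MeasurableSpace Ω] {μ : Measure Ω}

lemma integrable_eval_map_pi {X : ι → Ω → ℝ} (hX : ∀ i, Measurable (X i))
    (hXint : ∀ i, Integrable (X i) μ) (i : ι) :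
    Integrable (fun x => x i) (μ.map fun ω i => X i ω) :=
  (integrable_map_measure (measurable_pi_apply i).aestronglyMeasurable
    (measurable_pi_lambda _ hX).aemeasurable).mpr (hXint i)

lemma ProbabilityTheory.iIndepFun.measurePreserving_comp_perm_map [Fintype ι]
    [IsProbabilityMeasure μ] {β : Type*} [MeasurableSpace β] {X : ι → Ω → β}
    (hX : ∀ i, Measurable (X i)) (hXiid : iIndepFun X μ)
    (hident : ∀ i j, μ.map (X i) = μ.map (X j)) (σ : Equiv.Perm ι) :
    MeasurePreserving (· ∘ σ) (μ.map fun ω i => X i ω) (μ.map fun ω i => X i ω) :=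
  (hXiid.map_fun_eq_pi_map fun i => (hX i).aemeasurable) ▸
    measurePreserving_comp_perm_pi _ hident σ

end LawOfVector

section ExchangeableIncrements

variable {ι : Type*} [Fintype ι] {Q : Measure (ι → ℝ)} [IsFiniteMeasure Q]

lemma integral_sup'_add_le_of_perm (hQ : ∀ σ : Equiv.Perm ι, MeasurePreserving (· ∘ σ) Q Q)
    (hQint : ∀ i, Integrable (fun x => x i) Q) (v : ι → ℝ) {S : Finset ι} (hS : S.Nonempty)
    {σ : Equiv.Perm ι} (hσ : ∀ i ∈ S, v i ≤ v (σ i)) :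
    ∫ x, S.sup' hS (fun i => v i + x i) ∂Q ≤
      ∫ x, (S.map σ.toEmbedding).sup' hS.map (fun j => v j + x j) ∂Q := by
  have hint (w : ι → ℝ) : Integrable (fun x => S.sup' hS fun i => w i + x i) Q :=
    integrable_sup'_of_measurable_finset (c := fun _ => S) (fun _ => hS) measurable_const
      (fun i => by fun_prop) fun i => (integrable_const _).add (hQint i)
  have hG : Measurable fun x : ι → ℝ => (S.map σ.toEmbedding).sup' hS.map fun j => v j + x j :=
    measurable_sup'_of_measurable_finset (fun _ => hS.map) measurable_const fun j => by fun_prop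
  calc ∫ x, S.sup' hS (fun i => v i + x i) ∂Q
      ≤ ∫ x, S.sup' hS (fun i => v (σ i) + x i) ∂Q :=
        integral_mono (hint v) (hint (v ∘ σ)) fun x =>
          Finset.sup'_mono_fun fun i hi => add_le_add_left (hσ i hi) _
    _ = ∫ x, (S.map σ.toEmbedding).sup' hS.map (fun j => v j + (x ∘ σ.symm) j) ∂Q := by
        simp [Finset.sup'_map]
    _ = ∫ x, (S.map σ.toEmbedding).sup' hS.map (fun j => v j + x j) ∂Q := by
        rw [← integral_map (hQ σ.symm).measurable.aemeasurable hG.aestronglyMeasurable,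
          (hQ σ.symm).map_eq]

lemma integral_sup'_add_le_of_greedy (hQ : ∀ σ : Equiv.Perm ι, MeasurePreserving (· ∘ σ) Q Q)
    (hQint : ∀ i, Integrable (fun x => x i) Q) (v : ι → ℝ) {S T : Finset ι} (hS : S.Nonempty)
    (hT : T.Nonempty) (hcard : S.card = T.card) (hgreedy : ∀ i ∈ T, ∀ j ∉ T, v j ≤ v i) :
    ∫ x, S.sup' hS (fun i => v i + x i) ∂Q ≤ ∫ x, T.sup' hT (fun i => v i + x i) ∂Q := by
  obtain ⟨σ, rfl, hσ⟩ := Equiv.Perm.exists_map_eq_of_forall_le hcard hgreedy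
  exact integral_sup'_add_le_of_perm hQ hQint v hS hσ

end ExchangeableIncrements

lemma integrable_sup'_add_prod {ι : Type*} [Fintype ι] {P Q : Measure (ι → ℝ)}
    [IsFiniteMeasure P] [IsFiniteMeasure Q] (hP : ∀ i, Integrable (fun x => x i) P)
    (hQ : ∀ i, Integrable (fun x => x i) Q) {c : (ι → ℝ) → Finset ι} (hc : ∀ v, (c v).Nonempty)
    (hcm : ∀ S, MeasurableSet {v | c v = S}) :
    Integrable (fun p : (ι → ℝ) × (ι → ℝ) => (c p.1).sup' (hc p.1) fun i => p.1 i + p.2 i)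
      (P.prod Q) :=
  integrable_sup'_of_measurable_finset (fun p => hc p.1)
    ((measurable_to_countable' hcm).comp (f := Prod.fst) measurable_fst) (fun i => by fun_prop)
    fun i => ((hP i).comp_fst Q).add ((hQ i).comp_snd P)

lemma ProbabilityTheory.IndepFun.integral_comp_eq_integral_integral {Ω α β : Type*}
    [MeasurableSpace Ω] [MeasurableSpace α] [MeasurableSpace β] {μ : Measure Ω}
    [IsProbabilityMeasure μ] {X : Ω → α} {Y : Ω → β} (hXY : IndepFun X Y μ) (hX : Measurable X)
    (hY : Measurable Y) {φ : α × β → ℝ} (hφ : Integrable φ ((μ.map X).prod (μ.map Y))) :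
    ∫ ω, φ (X ω, Y ω) ∂μ = ∫ x, ∫ y, φ (x, y) ∂(μ.map Y) ∂(μ.map X) := by
  have hmap := (indepFun_iff_map_prod_eq_prod_map_map hX.aemeasurable hY.aemeasurable).mp hXY
  rw [← integral_prod _ hφ, ← hmap,
    integral_map (hX.prodMk hY).aemeasurable (hmap ▸ hφ.aestronglyMeasurable)]

/-- Two-stage, one-elimination greedy optimality: `V i` are the first-stage values,
`Δ i` are i.i.d. second-stage increments independent of the first-stage values. For any
measurable selection rule `f` choosing an `n`-element subset from the first-stage values,
the expected maximum of final values over `f`'s choice is at most that over the greedy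
choice `g` (the `n` indices with largest first-stage values). -/
theorem two_stage_greedy_optimal {Ω : Type*} [MeasurableSpace Ω] (μ : Measure Ω)
    [IsProbabilityMeasure μ] {N n : ℕ} (hn : 0 < n)
    (V Δ : Fin N → Ω → ℝ)
    (hVmeas : ∀ i, Measurable (V i)) (hΔmeas : ∀ i, Measurable (Δ i))
    (hVint : ∀ i, Integrable (V i) μ) (hΔint : ∀ i, Integrable (Δ i) μ)
    (hΔiid : iIndepFun Δ μ)
    (hΔident : ∀ i j, μ.map (Δ i) = μ.map (Δ j))
    (hindep : IndepFun (fun ω i => V i ω) (fun ω i => Δ i ω) μ)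
    (f g : (Fin N → ℝ) → Finset (Fin N))
    (hfcard : ∀ v, (f v).card = n) (hgcard : ∀ v, (g v).card = n)
    (hfmeas : ∀ S, MeasurableSet {v | f v = S}) (hgmeas : ∀ S, MeasurableSet {v | g v = S})
    (hgreedy : ∀ v, ∀ i ∈ g v, ∀ j ∉ g v, v j ≤ v i) :
    ∫ ω, (f (fun i => V i ω)).sup'
        (Finset.card_pos.mp (by rw [hfcard]; exact hn)) (fun i => V i ω + Δ i ω) ∂μ ≤
    ∫ ω, (g (fun i => V i ω)).sup'
        (Finset.card_pos.mp (by rw [hgcard]; exact hn)) (fun i => V i ω + Δ i ω) ∂μ := by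
  have hV : Measurable fun ω i => V i ω := measurable_pi_lambda _ hVmeas
  have hΔ : Measurable fun ω i => Δ i ω := measurable_pi_lambda _ hΔmeas
  have hf_ne (v : Fin N → ℝ) : (f v).Nonempty := Finset.card_pos.mp ((hfcard v).symm ▸ hn)
  have hg_ne (v : Fin N → ℝ) : (g v).Nonempty := Finset.card_pos.mp ((hgcard v).symm ▸ hn)
  have hPV_int := integrable_eval_map_pi hVmeas hVint
  have hPΔ_int := integrable_eval_map_pi hΔmeas hΔint
  have hf_int := integrable_sup'_add_prod hPV_int hPΔ_int hf_ne hfmeas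
  have hg_int := integrable_sup'_add_prod hPV_int hPΔ_int hg_ne hgmeas
  rw [hindep.integral_comp_eq_integral_integral hV hΔ hf_int,
    hindep.integral_comp_eq_integral_integral hV hΔ hg_int]
  exact integral_mono hf_int.integral_prod_left hg_int.integral_prod_left fun v =>
    integral_sup'_add_le_of_greedy (hΔiid.measurePreserving_comp_perm_map hΔmeas hΔident)
      hPΔ_int v (hf_ne v) (hg_ne v) ((hfcard v).trans (hgcard v).symm) (hgreedy v)
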